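/- Let λ₀, μ₀ ∈ ℝ with μ₀ > 0 and λ₀ + 2μ₀ > 0, and let Γ be the two-dimensional Kelvin matrix. Then for all x, y ∈ ℝ² with x ≠ y and each j ∈ {1,2}, the divergence in y of the j-th column of Γ(x−y) satisfies Σ_{i=1}^{2} ∂/∂y_i [ γ_{ij}(x−y) ] = −(1/(2π(λ₀+2μ₀)))·(x_j−y_j)/|x−y|². -/

import Mathlib

/-- Partial derivative in the `i`-th coordinate direction of a scalar field on `ℝ²`. -/
noncomputable def pd2 (i : Fin 2) (f : EuclideanSpace ℝ (Fin 2) → ℝ)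
    (x : EuclideanSpace ℝ (Fin 2)) : ℝ :=
  fderiv ℝ f x (EuclideanSpace.single i 1)

/-- Entry `γ_{ij}` of the two-dimensional Kelvin matrix:
`γ_{ij}(x) = α δ_{ij} ln|x| − β x_i x_j / |x|²`. -/
noncomputable def kelvin2 (α β : ℝ) (i j : Fin 2) (x : EuclideanSpace ℝ (Fin 2)) : ℝ :=
  α * (if i = j then (1 : ℝ) else 0) * Real.log ‖x‖ - β * x i * x j / ‖x‖ ^ 2

/-!
Put `w = x - y`, so that `∂/∂y_i = -∂/∂w_i`. Since `∂_k log ‖w‖ = w_k / ‖w‖²` and, in `ℝⁿ`,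
`∑_k ∂_k (w_k w_j / ‖w‖²) = (n - 1) w_j / ‖w‖²`, the divergence of the `j`-th column of the
Kelvin matrix in `ℝ²` is `(α - β) w_j / ‖w‖²`, and `α - β = 1 / (2π(λ₀ + 2μ₀))`.
-/

theorem fderiv_comp_const_sub {𝕜 E F : Type*} [NontriviallyNormedField 𝕜]
    [NormedAddCommGroup E] [NormedSpace 𝕜 E] [NormedAddCommGroup F] [NormedSpace 𝕜 F]
    (f : E → F) (a x : E) :
    fderiv 𝕜 (fun z => f (a - z)) x = -fderiv 𝕜 f (a - x) := by
  have h := (ContinuousLinearEquiv.neg 𝕜 : E ≃L[𝕜] E).comp_right_fderiv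
    (f := fun u => f (a + u)) (x := x)
  ext v
  simpa [Function.comp_def, sub_eq_add_neg, fderiv_comp_add_left] using congr($h v)

theorem pd2_comp_const_sub (i : Fin 2) (f : EuclideanSpace ℝ (Fin 2) → ℝ)
    (a x : EuclideanSpace ℝ (Fin 2)) :
    pd2 i (fun z => f (a - z)) x = -pd2 i f (a - x) := by
  simp only [pd2, fderiv_comp_const_sub, neg_apply]

section InnerProductSpace

variable {E : Type*} [NormedAddCommGroup E] [InnerProductSpace ℝ E] {w : E}

theorem hasFDerivAt_log_norm (hw : w ≠ 0) :
    HasFDerivAt (fun v : E => Real.log ‖v‖) ((‖w‖ ^ 2)⁻¹ • innerSL ℝ w) w := by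
  have hlog := ((hasStrictFDerivAt_norm_sq w).hasFDerivAt.log (by positivity)).const_mul (1 / 2)
  have h : (fun v : E => Real.log ‖v‖) = fun v => 1 / 2 * Real.log (‖v‖ ^ 2) := by
    funext v
    rw [Real.log_pow]
    ring
  rw [h]
  refine hlog.congr_fderiv ?_
  ext v
  simp only [one_div, smul_apply, coe_innerSL_apply, nsmul_eq_mul, Nat.cast_ofNat, smul_eq_mul]
  ring

theorem hasFDerivAt_inv_norm_sq (hw : w ≠ 0) :
    HasFDerivAt (fun v : E => (‖v‖ ^ 2)⁻¹) (-(2 / (‖w‖ ^ 2) ^ 2) • innerSL ℝ w) w := by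
  refine ((hasDerivAt_inv (by positivity : ‖w‖ ^ 2 ≠ 0)).comp_hasFDerivAt w
    (hasStrictFDerivAt_norm_sq w).hasFDerivAt).congr_fderiv ?_
  ext v
  simp only [neg_smul, neg_apply, smul_apply, coe_innerSL_apply, nsmul_eq_mul, Nat.cast_ofNat,
    smul_eq_mul, neg_inj]
  ring

end InnerProductSpace

section EuclideanSpace

variable {ι : Type*} [Fintype ι] {w : EuclideanSpace ℝ ι}

theorem hasFDerivAt_coord_mul_coord_div_norm_sq (hw : w ≠ 0) (i j : ι) :
    HasFDerivAt (fun v : EuclideanSpace ℝ ι => v i * v j / ‖v‖ ^ 2)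
      ((‖w‖ ^ 2)⁻¹ • (w j • EuclideanSpace.proj i + w i • EuclideanSpace.proj j)
        - (2 * w i * w j / (‖w‖ ^ 2) ^ 2) • innerSL ℝ w) w := by
  simp_rw [div_eq_mul_inv]
  refine (((EuclideanSpace.proj i).hasFDerivAt.mul (EuclideanSpace.proj j).hasFDerivAt).mul
    (hasFDerivAt_inv_norm_sq hw)).congr_fderiv ?_
  ext v
  simp only [EuclideanSpace.coe_proj, Pi.mul_apply, neg_smul, smul_neg, PiLp.proj_apply, smul_add,
    add_apply, neg_apply, smul_apply, coe_innerSL_apply, smul_eq_mul, sub_apply]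
  ring

variable [DecidableEq ι]

theorem sum_fderiv_coord_mul_coord_div_norm_sq (hw : w ≠ 0) (j : ι) :
    ∑ k, fderiv ℝ (fun v : EuclideanSpace ℝ ι => v k * v j / ‖v‖ ^ 2) w
        (EuclideanSpace.single k 1) = (Fintype.card ι - 1) * w j / ‖w‖ ^ 2 := by
  have hn : ‖w‖ ^ 2 ≠ 0 := by positivity
  have hd : ∀ k, fderiv ℝ (fun v : EuclideanSpace ℝ ι => v k * v j / ‖v‖ ^ 2) w
      (EuclideanSpace.single k 1) =
        (w j + if j = k then w k else 0) / ‖w‖ ^ 2 - 2 * w j * w k ^ 2 / (‖w‖ ^ 2) ^ 2 := by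
    intro k
    rw [(hasFDerivAt_coord_mul_coord_div_norm_sq hw k j).fderiv]
    simp only [smul_add, sub_apply, add_apply, smul_apply, PiLp.proj_apply, PiLp.single_apply,
      smul_eq_mul, coe_innerSL_apply, EuclideanSpace.inner_single_right, conj_trivial]
    split_ifs <;> ring
  calc ∑ k, fderiv ℝ (fun v : EuclideanSpace ℝ ι => v k * v j / ‖v‖ ^ 2) w
        (EuclideanSpace.single k 1)
      = (Fintype.card ι * w j + w j) / ‖w‖ ^ 2 - 2 * w j * ‖w‖ ^ 2 / (‖w‖ ^ 2) ^ 2 := by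
        rw [Finset.sum_congr rfl fun k _ => hd k, Finset.sum_sub_distrib, ← Finset.sum_div,
          ← Finset.sum_div, Finset.sum_add_distrib, ← Finset.mul_sum,
          ← EuclideanSpace.real_norm_sq_eq]
        simp
    _ = (Fintype.card ι - 1) * w j / ‖w‖ ^ 2 := by
        field_simp
        ring

end EuclideanSpace

section Kelvin

variable {α β : ℝ} {w : EuclideanSpace ℝ (Fin 2)}

theorem pd2_kelvin2 (hw : w ≠ 0) (i j : Fin 2) :
    pd2 i (kelvin2 α β i j) w =
      α * (if i = j then 1 else 0) * (w i / ‖w‖ ^ 2) -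
        β * fderiv ℝ (fun v : EuclideanSpace ℝ (Fin 2) => v i * v j / ‖v‖ ^ 2) w
          (EuclideanSpace.single i 1) := by
  have h : kelvin2 α β i j = fun v =>
      α * (if i = j then 1 else 0) * Real.log ‖v‖ - β * (v i * v j / ‖v‖ ^ 2) := by
    funext v
    simp only [kelvin2]
    ring
  rw [pd2, h, (((hasFDerivAt_log_norm hw).const_mul _).fun_sub
    ((hasFDerivAt_coord_mul_coord_div_norm_sq hw i j).differentiableAt.hasFDerivAt.const_mul
      β)).fderiv]
  simp only [sub_apply, smul_apply, innerSL_apply_apply, EuclideanSpace.inner_single_right,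
    conj_trivial, smul_eq_mul]
  ring

theorem sum_pd2_kelvin2 (hw : w ≠ 0) (j : Fin 2) :
    ∑ i, pd2 i (kelvin2 α β i j) w = (α - β) * w j / ‖w‖ ^ 2 := by
  simp only [pd2_kelvin2 hw, Finset.sum_sub_distrib, ← Finset.mul_sum,
    sum_fderiv_coord_mul_coord_div_norm_sq hw, mul_ite, mul_one, mul_zero, ite_mul, zero_mul,
    Finset.sum_ite_eq', Finset.mem_univ, if_true, Fintype.card_fin]
  ring

end Kelvin

theorem kelvin2_divergence_general
    (l0 m0 : ℝ) (hm : 0 < m0)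
    (α β : ℝ)
    (hα : α = (l0 + 3 * m0) / (4 * Real.pi * m0 * (l0 + 2 * m0)))
    (hβ : β = (l0 + m0) / (4 * Real.pi * m0 * (l0 + 2 * m0)))
    (x y : EuclideanSpace ℝ (Fin 2)) (hxy : x ≠ y) (j : Fin 2) :
    ∑ i, pd2 i (fun z => kelvin2 α β i j (x - z)) y =
      -(1 / (2 * Real.pi * (l0 + 2 * m0))) * (x j - y j) / ‖x - y‖ ^ 2 := by
  have hαβ : α - β = 1 / (2 * Real.pi * (l0 + 2 * m0)) := by
    rw [hα, hβ]
    field_simp [hm.ne']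
    ring
  simp only [pd2_comp_const_sub, Finset.sum_neg_distrib, sum_pd2_kelvin2 (sub_ne_zero.2 hxy), hαβ,
    PiLp.sub_apply]
  ring

theorem kelvin2_divergence
    (l0 m0 : ℝ) (hm : 0 < m0) (hl : 0 < l0 + 2 * m0)
    (α β : ℝ)
    (hα : α = (l0 + 3 * m0) / (4 * Real.pi * m0 * (l0 + 2 * m0)))
    (hβ : β = (l0 + m0) / (4 * Real.pi * m0 * (l0 + 2 * m0)))
    (x y : EuclideanSpace ℝ (Fin 2)) (hxy : x ≠ y) (j : Fin 2) :
    ∑ i, pd2 i (fun z => kelvin2 α β i j (x - z)) y =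
      -(1 / (2 * Real.pi * (l0 + 2 * m0))) * (x j - y j) / ‖x - y‖ ^ 2 :=
  kelvin2_divergence_general l0 m0 hm α β hα hβ x y hxy j
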